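/- arXiv:1907.02743 — 4 statements merged into one kernel-verified Lean document; each statement's English description precedes it below -/
import Mathlib

section
/- Let G be a finite simple graph on vertices x1,...,xn with edge ideal I(G) in the polynomial ring S = K[x1,...,xn], and let T be a triangle of G with vertex set {x1,x2,x3} such that x3 has degree 2 in G. Then for every integer s ≥ 2, the colon ideal (I(G)^(s) : x1·x2·x3) equals I(G)^(s-2), where I^(s) denotes the s-th symbolic power. -/
open MvPolynomial

namespace CW

variable {V : Type*}

/-- A vertex cover of a graph: a set of vertices meeting every edge. -/
def IsVertexCover (G : SimpleGraph V) (C : Set V) : Prop :=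
  ∀ ⦃v w : V⦄, G.Adj v w → v ∈ C ∨ w ∈ C

/-- A minimal vertex cover: no proper subset is a vertex cover. -/
def IsMinimalVertexCover (G : SimpleGraph V) (C : Set V) : Prop :=
  IsVertexCover G C ∧ ∀ D : Set V, D ⊂ C → ¬ IsVertexCover G D

/-- The edge ideal of a graph, in the polynomial ring over `K` with variables the vertices. -/
noncomputable def edgeIdeal (K : Type*) [Field K] (G : SimpleGraph V) : Ideal (MvPolynomial V K) :=
  Ideal.span {m | ∃ v w : V, G.Adj v w ∧ m = X v * X w}

/-- The monomial prime ideal generated by the variables in `C`. -/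
noncomputable def coverIdeal (K : Type*) [Field K] (C : Set V) : Ideal (MvPolynomial V K) :=
  Ideal.span ((fun v => (X v : MvPolynomial V K)) '' C)

/-- The `s`-th symbolic power of the edge ideal:
the intersection of the `s`-th powers of the minimal-vertex-cover primes. -/
noncomputable def symbolicPower (K : Type*) [Field K] (G : SimpleGraph V) (s : ℕ) :
    Ideal (MvPolynomial V K) :=
  ⨅ C ∈ {C : Set V | IsMinimalVertexCover G C}, (coverIdeal K C) ^ s

/-- A matching: a set of edges of `G`, pairwise sharing no vertex. -/
def IsMatching (G : SimpleGraph V) (M : Finset (Sym2 V)) : Prop :=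
  (∀ e ∈ M, e ∈ G.edgeSet) ∧
    ∀ e ∈ M, ∀ f ∈ M, e ≠ f → ∀ v : V, v ∈ e → v ∉ f

/-- An induced matching: a matching such that no edge of `G` outside it is contained
in the union of two of its edges. -/
def IsInducedMatching (G : SimpleGraph V) (M : Finset (Sym2 V)) : Prop :=
  IsMatching G M ∧
    ∀ f ∈ G.edgeSet, f ∉ M → ∀ e₁ ∈ M, ∀ e₂ ∈ M,
      ¬ (∀ v : V, v ∈ f → v ∈ e₁ ∨ v ∈ e₂)

/-- The matching number: the maximum size of a matching. -/
noncomputable def matchNum (G : SimpleGraph V) : ℕ :=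
  sSup {k : ℕ | ∃ M : Finset (Sym2 V), IsMatching G M ∧ M.card = k}

/-- The induced matching number: the maximum size of an induced matching. -/
noncomputable def indMatchNum (G : SimpleGraph V) : ℕ :=
  sSup {k : ℕ | ∃ M : Finset (Sym2 V), IsInducedMatching G M ∧ M.card = k}

/-- A Cameron–Walker graph: the matching number equals the induced matching number. -/
def IsCameronWalker (G : SimpleGraph V) : Prop :=
  matchNum G = indMatchNum G

/-- The graph obtained by deleting the vertices in `U`: it keeps the vertex set but
only the edges avoiding `U` (isolated vertices are irrelevant for all notions used). -/
def deleteVerts (G : SimpleGraph V) (U : Set V) : SimpleGraph V where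
  Adj v w := G.Adj v w ∧ v ∉ U ∧ w ∉ U
  symm := ⟨fun _ _ h => ⟨h.1.symm, h.2.2, h.2.1⟩⟩
  loopless := ⟨fun u h => G.loopless.irrefl u h.1⟩

end CW

/-! A polynomial lies in `p_C ^ s` iff each of its monomials has degree at least `s` in the
variables of `C`, so multiplying by `x1 x2 x3` shifts the threshold by the number of triangle
vertices in `C`. That number is 2 for every minimal vertex cover `C`: a cover misses at most one
vertex of the triangle, and it cannot contain all three, since `x3` has no neighbour outside the
triangle and `C \ {x3}` would then still be a cover. -/

open Finsupp

namespace MvPolynomial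

variable {σ R : Type*} [CommSemiring R]

theorem le_weight_indicator_of_mem_span_X_image_pow {C : Set σ} {n : ℕ} {p : MvPolynomial σ R}
    (hp : p ∈ Ideal.span (X '' C) ^ n) :
    ∀ m ∈ p.support, n ≤ weight (C.indicator 1 : σ → ℕ) m := by
  classical
  induction n generalizing p with
  | zero => simp
  | succ n ih =>
    rw [pow_succ'] at hp
    refine Submodule.mul_induction_on hp (fun a ha b hb m hm => ?_) (fun a b ha hb m hm => ?_)
    · obtain ⟨ma, hma, mb, hmb, rfl⟩ := Finset.mem_add.1 (support_mul a b hm)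
      obtain ⟨i, hi, hmai⟩ := mem_ideal_span_X_image.1 ha ma hma
      have h1 := le_weight_of_ne_zero' (C.indicator (1 : σ → ℕ)) hmai
      rw [Set.indicator_of_mem hi, Pi.one_apply] at h1
      rw [map_add]
      have := ih hb mb hmb
      omega
    · rcases Finset.mem_union.1 (support_add hm) with h | h
      exacts [ha m h, hb m h]

theorem monomial_mem_span_X_image_pow {C : Set σ} {n : ℕ} {m : σ →₀ ℕ} (r : R)
    (h : n ≤ weight (C.indicator 1 : σ → ℕ) m) :
    monomial m r ∈ Ideal.span (X '' C) ^ n := by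
  induction n generalizing m with
  | zero => simp
  | succ n ih =>
    obtain ⟨i, hi, hmi⟩ : ∃ i ∈ C, m i ≠ 0 := by
      have hw : weight (C.indicator 1 : σ → ℕ) m ≠ 0 := by omega
      rw [weight_apply, Finsupp.sum] at hw
      obtain ⟨i, -, hi⟩ := Finset.exists_ne_zero_of_sum_ne_zero hw
      by_cases hiC : i ∈ C
      · exact ⟨i, hiC, by simpa [hiC] using hi⟩
      · simp [hiC] at hi
    have hsplit := weight_sub_single_add (w := C.indicator (1 : σ → ℕ)) hmi
    rw [Set.indicator_of_mem hi, Pi.one_apply] at hsplit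
    have hm : monomial m r = X i * monomial (m - single i 1) r := by
      rw [X, monomial_mul, one_mul, add_comm, sub_add_single_one_cancel hmi]
    rw [hm, pow_succ']
    exact Ideal.mul_mem_mul (Ideal.subset_span ⟨i, hi, rfl⟩) (ih (by omega))

theorem mem_span_X_image_pow_iff {C : Set σ} {n : ℕ} {p : MvPolynomial σ R} :
    p ∈ Ideal.span (X '' C) ^ n ↔
      ∀ m ∈ p.support, n ≤ weight (C.indicator 1 : σ → ℕ) m := by
  refine ⟨le_weight_indicator_of_mem_span_X_image_pow, fun h => ?_⟩
  rw [p.as_sum]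
  exact Ideal.sum_mem _ fun m hm => monomial_mem_span_X_image_pow _ (h m hm)

/-- The subtraction is truncated on purpose: when `n` is below the weight of `e`, both sides hold
for every `p`. -/
theorem mul_monomial_mem_span_X_image_pow_iff {C : Set σ} {n : ℕ} {p : MvPolynomial σ R}
    (e : σ →₀ ℕ) : p * monomial e 1 ∈ Ideal.span (X '' C) ^ n ↔
      p ∈ Ideal.span (X '' C) ^ (n - weight (C.indicator 1 : σ → ℕ) e) := by
  rw [mem_span_X_image_pow_iff, mem_span_X_image_pow_iff,
    show (p * monomial e (1 : R)).support = p.support.map (addRightEmbedding e) from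
      AddMonoidAlgebra.support_coeff_mul_single p _ (by simp) _]
  simp only [Finset.mem_map, addRightEmbedding_apply, forall_exists_index, and_imp,
    forall_apply_eq_imp_iff₂, map_add, Nat.sub_le_iff_le_add]

end MvPolynomial

theorem SimpleGraph.eq_or_eq_of_adj_of_degree_eq_two {V : Type*} {G : SimpleGraph V}
    {v a b w : V} [Fintype (G.neighborSet v)] (hva : G.Adj v a) (hvb : G.Adj v b) (hab : a ≠ b)
    (hdeg : G.degree v = 2) (hvw : G.Adj v w) : w = a ∨ w = b := by
  classical
  have hnbr : G.neighborFinset v = {a, b} :=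
    (Finset.eq_of_subset_of_card_le (by simp [Finset.insert_subset_iff, hva, hvb])
      (by rw [Finset.card_pair hab, card_neighborFinset_eq_degree, hdeg])).symm
  simpa [hnbr] using (G.mem_neighborFinset v w).2 hvw

namespace CW

variable {V : Type*} {G : SimpleGraph V} {C : Set V}

theorem IsMinimalVertexCover.exists_adj_notMem (hC : IsMinimalVertexCover G C) {v : V}
    (hv : v ∈ C) : ∃ w, G.Adj v w ∧ w ∉ C := by
  by_contra! hnbr
  refine hC.2 (C \ {v}) (Set.sdiff_singleton_ssubset.2 hv) fun a b hab => ?_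
  by_cases ha : a = v
  · subst ha
    exact Or.inr ⟨hnbr b hab, fun hb => G.loopless.irrefl a (hb ▸ hab)⟩
  by_cases hb : b = v
  · subst hb
    exact Or.inl ⟨hnbr a hab.symm, ha⟩
  · exact (hC.1 hab).imp (fun h => ⟨h, ha⟩) fun h => ⟨h, hb⟩

theorem IsMinimalVertexCover.weight_triangle_eq_two (hC : IsMinimalVertexCover G C)
    {x1 x2 x3 : V} (h12 : G.Adj x1 x2) (h13 : G.Adj x1 x3) (h23 : G.Adj x2 x3)
    (hnbr : ∀ u, G.Adj x3 u → u = x1 ∨ u = x2) :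
    weight (C.indicator (1 : V → ℕ)) (single x1 1 + single x2 1 + single x3 1) = 2 := by
  classical
  have hnot_all : ¬ (x1 ∈ C ∧ x2 ∈ C ∧ x3 ∈ C) := by
    rintro ⟨h1, h2, h3⟩
    obtain ⟨u, hu, huC⟩ := hC.exists_adj_notMem h3
    rcases hnbr u hu with rfl | rfl <;> contradiction
  have c12 := hC.1 h12
  have c13 := hC.1 h13
  have c23 := hC.1 h23
  simp only [map_add, weight_single, smul_eq_mul, one_mul, Set.indicator_apply, Pi.one_apply]
  split_ifs <;> tauto

end CW

theorem stmt_1_general {V : Type*} [Fintype V] (K : Type*) [Field K]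
    (G : SimpleGraph V) [DecidableRel G.Adj] (x1 x2 x3 : V)
    (h12 : G.Adj x1 x2) (h13 : G.Adj x1 x3) (h23 : G.Adj x2 x3)
    (hdeg : G.degree x3 = 2) (s : ℕ) :
    (CW.symbolicPower K G s).colon
        (Ideal.span {(X x1 : MvPolynomial V K) * X x2 * X x3})
      = CW.symbolicPower K G (s - 2) := by
  have hnbr : ∀ u, G.Adj x3 u → u = x1 ∨ u = x2 := fun _ =>
    G.eq_or_eq_of_adj_of_degree_eq_two h13.symm h23.symm h12.ne hdeg
  have hmono : (X x1 * X x2 * X x3 : MvPolynomial V K) =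
      monomial (single x1 1 + single x2 1 + single x3 1) 1 := by
    simp only [X, monomial_mul, one_mul]
  ext g
  simp only [Ideal.mem_colon_span_singleton, CW.symbolicPower, Ideal.mem_iInf, Set.mem_ofPred_eq,
    hmono]
  refine forall₂_congr fun C hC => ?_
  rw [← hC.weight_triangle_eq_two h12 h13 h23 hnbr]
  exact mul_monomial_mem_span_X_image_pow_iff _

/-- If `T = {x1, x2, x3}` is a triangle of `G` and `x3` has degree 2 in `G`, then for
every `s ≥ 2` we have `(I(G)^(s) : x1·x2·x3) = I(G)^(s-2)`. -/
theorem stmt_1 {V : Type*} [Fintype V] [DecidableEq V] (K : Type*) [Field K]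
    (G : SimpleGraph V) [DecidableRel G.Adj] (x1 x2 x3 : V)
    (h12 : G.Adj x1 x2) (h13 : G.Adj x1 x3) (h23 : G.Adj x2 x3)
    (hdeg : G.degree x3 = 2) (s : ℕ) (hs : 2 ≤ s) :
    (CW.symbolicPower K G s).colon
        (Ideal.span {(X x1 : MvPolynomial V K) * X x2 * X x3})
      = CW.symbolicPower K G (s - 2) :=
  stmt_1_general K G x1 x2 x3 h12 h13 h23 hdeg s
end

section
/- Let G be a Cameron-Walker graph and T = {x1, x2, x3} a pendant triangle of G with deg(x2) = deg(x3) = 2. Then G \ {x2, x3} is a Cameron-Walker graph with indmatch(G \ {x2, x3}) = indmatch(G) - 1. -/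
open MvPolynomial

/-!
Since `x₂` and `x₃` have degree two, every edge through one of them lies in the triangle, so any
two such edges share a vertex and a matching contains at most one of them. Dropping that edge from
a maximum induced matching of `G` gives `indmatch G ≤ indmatch (G \ {x₂, x₃}) + 1`; adding the edge
`x₂x₃` to a matching of `G \ {x₂, x₃}` gives `match (G \ {x₂, x₃}) + 1 ≤ match G`. Together with
`indmatch ≤ match` and `match G = indmatch G`, all these inequalities are equalities.
-/

namespace CW

variable {V : Type*} {G : SimpleGraph V} {M N : Finset (Sym2 V)} {U : Set V}

lemma mem_edgeSet_deleteVerts {e : Sym2 V} :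
    e ∈ (deleteVerts G U).edgeSet ↔ e ∈ G.edgeSet ∧ ∀ v ∈ e, v ∉ U := by
  induction e using Sym2.ind with
  | _ a b => simp [deleteVerts, and_comm]

lemma isMatching_empty (G : SimpleGraph V) : IsMatching G ∅ := by
  simp [IsMatching]

lemma isInducedMatching_empty (G : SimpleGraph V) : IsInducedMatching G ∅ := by
  simp [IsInducedMatching, isMatching_empty]

lemma IsMatching.subset (hM : IsMatching G M) (hNM : N ⊆ M) : IsMatching G N :=
  ⟨fun e he => hM.1 e (hNM he), fun e he f hf => hM.2 e (hNM he) f (hNM hf)⟩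

lemma IsInducedMatching.subset (hM : IsInducedMatching G M) (hNM : N ⊆ M) :
    IsInducedMatching G N := by
  refine ⟨hM.1.subset hNM, fun f hf hfN e₁ he₁ e₂ he₂ hcover => ?_⟩
  by_cases hfM : f ∈ M
  · -- `f` is itself an edge of the matching, so it cannot meet `e₁` or `e₂`.
    have hf₁ : f ≠ e₁ := fun h => hfN (h ▸ he₁)
    have hf₂ : f ≠ e₂ := fun h => hfN (h ▸ he₂)
    obtain h | h := hcover _ (Sym2.out_fst_mem f)
    · exact hM.1.2 f hfM e₁ (hNM he₁) hf₁ _ (Sym2.out_fst_mem f) h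
    · exact hM.1.2 f hfM e₂ (hNM he₂) hf₂ _ (Sym2.out_fst_mem f) h
  · exact hM.2 f hf hfM e₁ (hNM he₁) e₂ (hNM he₂) hcover

lemma IsMatching.of_deleteVerts (hM : IsMatching (deleteVerts G U) M) : IsMatching G M :=
  ⟨fun e he => (mem_edgeSet_deleteVerts.1 (hM.1 e he)).1, hM.2⟩

lemma IsInducedMatching.deleteVerts (hM : IsInducedMatching G M)
    (hU : ∀ e ∈ M, ∀ v ∈ e, v ∉ U) : IsInducedMatching (deleteVerts G U) M :=
  ⟨⟨fun e he => mem_edgeSet_deleteVerts.2 ⟨hM.1.1 e he, hU e he⟩, hM.1.2⟩,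
    fun f hf => hM.2 f (mem_edgeSet_deleteVerts.1 hf).1⟩

lemma IsMatching.insert [DecidableEq V] {e : Sym2 V} (hM : IsMatching G M)
    (he : e ∈ G.edgeSet) (hdisj : ∀ f ∈ M, ∀ v ∈ e, v ∉ f) : IsMatching G (insert e M) := by
  refine ⟨Finset.forall_mem_insert _ _ _ |>.2 ⟨he, hM.1⟩, ?_⟩
  intro f hf g hg hfg v hvf hvg
  rcases Finset.mem_insert.1 hf with rfl | hfM
  · rcases Finset.mem_insert.1 hg with rfl | hgM
    · exact hfg rfl
    · exact hdisj g hgM v hvf hvg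
  · rcases Finset.mem_insert.1 hg with rfl | hgM
    · exact hdisj f hfM v hvg hvf
    · exact hM.2 f hfM g hgM hfg v hvf hvg

section Numbers

variable [Fintype V]

lemma bddAbove_card (P : Finset (Sym2 V) → Prop) :
    BddAbove {k : ℕ | ∃ M : Finset (Sym2 V), P M ∧ M.card = k} := by
  classical
  refine ⟨Fintype.card (Sym2 V), ?_⟩
  rintro _ ⟨M, _, rfl⟩
  exact M.card_le_univ

lemma IsMatching.card_le_matchNum (hM : IsMatching G M) : M.card ≤ matchNum G :=
  le_csSup (bddAbove_card _) ⟨M, hM, rfl⟩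

lemma IsInducedMatching.card_le_indMatchNum (hM : IsInducedMatching G M) :
    M.card ≤ indMatchNum G :=
  le_csSup (bddAbove_card _) ⟨M, hM, rfl⟩

lemma exists_isMatching_card_eq_matchNum (G : SimpleGraph V) :
    ∃ M, IsMatching G M ∧ M.card = matchNum G :=
  Nat.sSup_mem (s := {k | ∃ M, IsMatching G M ∧ M.card = k})
    ⟨0, ∅, isMatching_empty G, rfl⟩ (bddAbove_card _)

lemma exists_isInducedMatching_card_eq_indMatchNum (G : SimpleGraph V) :
    ∃ M, IsInducedMatching G M ∧ M.card = indMatchNum G :=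
  Nat.sSup_mem (s := {k | ∃ M, IsInducedMatching G M ∧ M.card = k})
    ⟨0, ∅, isInducedMatching_empty G, rfl⟩ (bddAbove_card _)

lemma indMatchNum_le_matchNum (G : SimpleGraph V) : indMatchNum G ≤ matchNum G := by
  obtain ⟨M, hM, hcard⟩ := exists_isInducedMatching_card_eq_indMatchNum G
  exact hcard ▸ hM.1.card_le_matchNum

lemma matchNum_deleteVerts_add_one_le {u v : V} (huv : G.Adj u v) :
    matchNum (deleteVerts G {u, v}) + 1 ≤ matchNum G := by
  classical
  obtain ⟨M, hM, hcard⟩ := exists_isMatching_card_eq_matchNum (deleteVerts G {u, v})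
  have hdisj : ∀ f ∈ M, ∀ w ∈ s(u, v), w ∉ f := by
    intro f hf w hw hwf
    have hwU := (mem_edgeSet_deleteVerts.1 (hM.1 f hf)).2 w hwf
    simp only [Set.mem_insert_iff, Set.mem_singleton_iff] at hwU
    exact hwU (Sym2.mem_iff.1 hw)
  have huvM : s(u, v) ∉ M := fun h => hdisj _ h u (Sym2.mem_mk_left u v) (Sym2.mem_mk_left u v)
  calc matchNum (deleteVerts G {u, v}) + 1 = (insert s(u, v) M).card := by
        rw [Finset.card_insert_of_notMem huvM, hcard]
    _ ≤ matchNum G := (hM.of_deleteVerts.insert huv hdisj).card_le_matchNum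

end Numbers

section PendantTriangle

variable [Fintype V] [DecidableRel G.Adj] {x₁ x₂ x₃ : V}

lemma eq_or_eq_of_adj_of_degree_eq_two {x y z w : V} (hy : G.Adj x y) (hz : G.Adj x z)
    (hyz : y ≠ z) (hx : G.degree x = 2) (hw : G.Adj x w) : w = y ∨ w = z := by
  classical
  have hsub : ({y, z} : Finset V) ⊆ G.neighborFinset x := by
    simp [Finset.insert_subset_iff, hy, hz]
  have hnbr := Finset.eq_of_subset_of_card_le hsub
    (by rw [G.card_neighborFinset_eq_degree, hx, Finset.card_pair hyz])
  have hw' : w ∈ ({y, z} : Finset V) := hnbr ▸ (G.mem_neighborFinset x w).2 hw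
  simpa using hw'

lemma edge_eq_of_mem_pendantTriangle (h₁₂ : G.Adj x₁ x₂) (h₁₃ : G.Adj x₁ x₃)
    (h₂₃ : G.Adj x₂ x₃) (hd₂ : G.degree x₂ = 2) (hd₃ : G.degree x₃ = 2) {e : Sym2 V}
    (he : e ∈ G.edgeSet) (hx : x₂ ∈ e ∨ x₃ ∈ e) :
    e = s(x₁, x₂) ∨ e = s(x₁, x₃) ∨ e = s(x₂, x₃) := by
  induction e using Sym2.ind with
  | _ a b =>
    rw [SimpleGraph.mem_edgeSet] at he
    have hn₂ := fun w => eq_or_eq_of_adj_of_degree_eq_two (w := w) h₁₂.symm h₂₃ h₁₃.ne hd₂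
    have hn₃ := fun w => eq_or_eq_of_adj_of_degree_eq_two (w := w) h₁₃.symm h₂₃.symm h₁₂.ne hd₃
    simp only [Sym2.mem_iff] at hx
    rcases hx with (rfl | rfl) | (rfl | rfl)
    · rcases hn₂ b he with rfl | rfl <;> simp
    · rcases hn₂ a he.symm with rfl | rfl <;> simp
    · rcases hn₃ b he with rfl | rfl <;> simp
    · rcases hn₃ a he.symm with rfl | rfl <;> simp

lemma eq_of_mem_pendantTriangle (h₁₂ : G.Adj x₁ x₂) (h₁₃ : G.Adj x₁ x₃)
    (h₂₃ : G.Adj x₂ x₃) (hd₂ : G.degree x₂ = 2) (hd₃ : G.degree x₃ = 2) (hM : IsMatching G M)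
    {e f : Sym2 V} (he : e ∈ M) (hf : f ∈ M) (hxe : x₂ ∈ e ∨ x₃ ∈ e) (hxf : x₂ ∈ f ∨ x₃ ∈ f) :
    e = f := by
  by_contra hef
  have hdisj := hM.2 e he f hf hef
  have he' := edge_eq_of_mem_pendantTriangle h₁₂ h₁₃ h₂₃ hd₂ hd₃ (hM.1 e he) hxe
  have hf' := edge_eq_of_mem_pendantTriangle h₁₂ h₁₃ h₂₃ hd₂ hd₃ (hM.1 f hf) hxf
  -- any two edges of a triangle share a vertex
  rcases he' with rfl | rfl | rfl <;> rcases hf' with rfl | rfl | rfl <;> simp_all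

lemma indMatchNum_le_indMatchNum_deleteVerts_add_one (h₁₂ : G.Adj x₁ x₂) (h₁₃ : G.Adj x₁ x₃)
    (h₂₃ : G.Adj x₂ x₃) (hd₂ : G.degree x₂ = 2) (hd₃ : G.degree x₃ = 2) :
    indMatchNum G ≤ indMatchNum (deleteVerts G {x₂, x₃}) + 1 := by
  classical
  obtain ⟨M, hM, hcard⟩ := exists_isInducedMatching_card_eq_indMatchNum G
  have htouch : (M.filter fun e => x₂ ∈ e ∨ x₃ ∈ e).card ≤ 1 := by
    refine Finset.card_le_one.2 fun e he f hf => ?_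
    rw [Finset.mem_filter] at he hf
    exact eq_of_mem_pendantTriangle h₁₂ h₁₃ h₂₃ hd₂ hd₃ hM.1 he.1 hf.1 he.2 hf.2
  have hrest : IsInducedMatching (deleteVerts G {x₂, x₃})
      (M.filter fun e => ¬(x₂ ∈ e ∨ x₃ ∈ e)) := by
    refine (hM.subset (Finset.filter_subset _ _)).deleteVerts fun e he v hv hvU => ?_
    rw [Finset.mem_filter] at he
    rcases hvU with rfl | rfl
    exacts [he.2 (Or.inl hv), he.2 (Or.inr hv)]
  calc indMatchNum G
      = (M.filter fun e => x₂ ∈ e ∨ x₃ ∈ e).card +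
          (M.filter fun e => ¬(x₂ ∈ e ∨ x₃ ∈ e)).card := by
        rw [Finset.card_filter_add_card_filter_not, hcard]
    _ ≤ 1 + indMatchNum (deleteVerts G {x₂, x₃}) := add_le_add htouch hrest.card_le_indMatchNum
    _ = indMatchNum (deleteVerts G {x₂, x₃}) + 1 := add_comm _ _

end PendantTriangle

end CW

theorem stmt_9_general {V : Type*} [Fintype V] (G : SimpleGraph V)
    [DecidableRel G.Adj] (hCW : CW.IsCameronWalker G) (x1 x2 x3 : V)
    (h12 : G.Adj x1 x2) (h13 : G.Adj x1 x3) (h23 : G.Adj x2 x3)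
    (hd2 : G.degree x2 = 2) (hd3 : G.degree x3 = 2) :
    CW.IsCameronWalker (CW.deleteVerts G {x2, x3}) ∧
      CW.indMatchNum (CW.deleteVerts G {x2, x3}) = CW.indMatchNum G - 1 := by
  have hind := CW.indMatchNum_le_indMatchNum_deleteVerts_add_one h12 h13 h23 hd2 hd3
  have hmatch := CW.matchNum_deleteVerts_add_one_le h23
  have hle := CW.indMatchNum_le_matchNum (CW.deleteVerts G {x2, x3})
  unfold CW.IsCameronWalker at hCW ⊢
  omega

/-- If `G` is Cameron–Walker and `T = {x1, x2, x3}` is a pendant triangle of `G` with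
`deg(x2) = deg(x3) = 2`, then `G \ {x2, x3}` is Cameron–Walker and its induced matching
number is `indmatch(G) - 1`. -/
theorem stmt_9 {V : Type*} [Fintype V] [DecidableEq V] (G : SimpleGraph V)
    [DecidableRel G.Adj] (hCW : CW.IsCameronWalker G) (x1 x2 x3 : V)
    (h12 : G.Adj x1 x2) (h13 : G.Adj x1 x3) (h23 : G.Adj x2 x3)
    (hd2 : G.degree x2 = 2) (hd3 : G.degree x3 = 2) (hd1 : G.degree x1 ≠ 2) :
    CW.IsCameronWalker (CW.deleteVerts G {x2, x3}) ∧
      CW.indMatchNum (CW.deleteVerts G {x2, x3}) = CW.indMatchNum G - 1 :=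
  stmt_9_general G hCW x1 x2 x3 h12 h13 h23 hd2 hd3
end

section
/- Let G be a finite simple graph, and let e = x1x2 be a pendant edge of G (i.e., x2 is a leaf whose only neighbor is x1). Then for every integer s ≥ 1, the colon ideal of the s-th symbolic power satisfies (I(G)^(s) : x1·x2) = I(G)^(s-1). -/
open MvPolynomial

/-!
For a set `C` of vertices, `p_C ^ s` consists of the polynomials all of whose monomials have
at least `s` factors from `C`, counted with multiplicity. Multiplying by `x_v` raises that count by
one if `v ∈ C` and leaves it unchanged otherwise, so `(p_C ^ (s + 1) : x_a x_b) = p_C ^ s` whenever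
exactly one of `a`, `b` lies in `C`. Colon ideals commute with intersections, and a minimal vertex
cover contains exactly one end of a pendant edge: if it contained the leaf `x₂` together with its
neighbour `x₁`, removing `x₂` would leave a smaller cover.
-/

lemma Finsupp.weight_mono {σ : Type*} (w : σ → ℕ) :
    Monotone (Finsupp.weight w : (σ →₀ ℕ) →+ ℕ) := by
  intro a b hab
  obtain ⟨c, rfl⟩ := le_iff_exists_add.mp hab
  simp

namespace MvPolynomial

variable {σ R : Type*} [CommSemiring R]

variable (R) in
noncomputable def restrictWeightIdeal (w : σ → ℕ) (n : ℕ) : Ideal (MvPolynomial σ R) :=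
  restrictSupportIdeal R _ ((isUpperSet_Ici n).preimage (Finsupp.weight_mono w))

lemma mem_restrictWeightIdeal {w : σ → ℕ} {n : ℕ} {p : MvPolynomial σ R} :
    p ∈ restrictWeightIdeal R w n ↔ ∀ m ∈ p.support, n ≤ Finsupp.weight w m :=
  Iff.rfl

@[simp]
lemma restrictWeightIdeal_zero (w : σ → ℕ) : restrictWeightIdeal R w 0 = ⊤ :=
  eq_top_iff.2 fun _ _ => mem_restrictWeightIdeal.2 fun _ _ => Nat.zero_le _

lemma restrictWeightIdeal_mul_le (w : σ → ℕ) (a b : ℕ) :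
    restrictWeightIdeal R w a * restrictWeightIdeal R w b ≤ restrictWeightIdeal R w (a + b) := by
  classical
  rw [Ideal.mul_le]
  intro f hf g hg
  rw [mem_restrictWeightIdeal] at *
  intro m hm
  obtain ⟨m₁, hm₁, m₂, hm₂, rfl⟩ := Finset.mem_add.mp (support_mul f g hm)
  grw [map_add, ← hf m₁ hm₁, ← hg m₂ hm₂]

lemma X_mul_mem_restrictWeightIdeal_iff {w : σ → ℕ} {n : ℕ} {v : σ} {p : MvPolynomial σ R} :
    X v * p ∈ restrictWeightIdeal R w (n + w v) ↔ p ∈ restrictWeightIdeal R w n := by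
  simp [mem_restrictWeightIdeal, Finsupp.weight_single, add_comm (w v)]

end MvPolynomial

namespace CW

variable {V K : Type*} [Field K] {C : Set V}

lemma coverIdeal_pow_le_restrictWeightIdeal (s : ℕ) :
    coverIdeal K C ^ s ≤ restrictWeightIdeal K (C.indicator 1) s := by
  induction s with
  | zero => simp
  | succ s ih =>
    refine (Ideal.mul_mono ih ?_).trans (restrictWeightIdeal_mul_le _ s 1)
    rw [coverIdeal, Ideal.span_le]
    rintro _ ⟨v, hv, rfl⟩
    simpa [hv] using X_mul_mem_restrictWeightIdeal_iff (w := C.indicator 1) (n := 0) (v := v)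
      (p := (1 : MvPolynomial V K))

lemma monomial_mem_coverIdeal_pow {s : ℕ} {m : V →₀ ℕ}
    (h : s ≤ Finsupp.weight (C.indicator 1) m) (c : K) : monomial m c ∈ coverIdeal K C ^ s := by
  classical
  induction s generalizing m with
  | zero => simp
  | succ s ih =>
    obtain ⟨v, -, hv⟩ : ∃ v ∈ m.support, m v • C.indicator 1 v ≠ 0 :=
      Finset.exists_ne_zero_of_sum_ne_zero (by rw [Finsupp.weight_apply, Finsupp.sum] at h; omega)
    have hvC : v ∈ C := Set.mem_of_indicator_ne_zero (right_ne_zero_of_smul hv)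
    obtain ⟨m', rfl⟩ : ∃ m', m = Finsupp.single v 1 + m' :=
      le_iff_exists_add.mp <| Finsupp.single_le_iff.mpr <|
        Nat.one_le_iff_ne_zero.mpr (left_ne_zero_of_smul hv)
    rw [map_add, Finsupp.weight_single, Set.indicator_of_mem hvC, Pi.one_apply, one_smul] at h
    rw [monomial_single_add, pow_one, pow_succ']
    exact Ideal.mul_mem_mul (Ideal.subset_span ⟨v, hvC, rfl⟩) (ih (by omega))

theorem coverIdeal_pow_eq_restrictWeightIdeal (s : ℕ) :
    coverIdeal K C ^ s = restrictWeightIdeal K (C.indicator 1) s := by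
  refine (coverIdeal_pow_le_restrictWeightIdeal s).antisymm fun f hf => ?_
  rw [f.as_sum]
  exact Ideal.sum_mem _ fun m hm =>
    monomial_mem_coverIdeal_pow (mem_restrictWeightIdeal.1 hf m hm) _

lemma X_mul_mem_coverIdeal_pow_succ_iff {v : V} (hv : v ∈ C) {s : ℕ} {f : MvPolynomial V K} :
    X v * f ∈ coverIdeal K C ^ (s + 1) ↔ f ∈ coverIdeal K C ^ s := by
  simpa [coverIdeal_pow_eq_restrictWeightIdeal, hv] using
    X_mul_mem_restrictWeightIdeal_iff (w := C.indicator 1) (n := s) (v := v) (p := f)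

lemma X_mul_mem_coverIdeal_pow_iff {v : V} (hv : v ∉ C) {s : ℕ} {f : MvPolynomial V K} :
    X v * f ∈ coverIdeal K C ^ s ↔ f ∈ coverIdeal K C ^ s := by
  simpa [coverIdeal_pow_eq_restrictWeightIdeal, hv] using
    X_mul_mem_restrictWeightIdeal_iff (w := C.indicator 1) (n := s) (v := v) (p := f)

theorem coverIdeal_pow_succ_colon_X_mul_X {a b : V} (ha : a ∈ C) (hb : b ∉ C) (s : ℕ) :
    (coverIdeal K C ^ (s + 1)).colon (Ideal.span {(X a : MvPolynomial V K) * X b}) =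
      coverIdeal K C ^ s := by
  ext f
  rw [Ideal.mem_colon_span_singleton, mul_comm, mul_assoc, X_mul_mem_coverIdeal_pow_succ_iff ha,
    X_mul_mem_coverIdeal_pow_iff hb]

variable {G : SimpleGraph V}

theorem IsMinimalVertexCover.mem_iff_notMem_of_pendant (hC : IsMinimalVertexCover G C)
    {x₁ x₂ : V} (hadj : G.Adj x₁ x₂) (hleaf : ∀ w, G.Adj x₂ w → w = x₁) : x₁ ∈ C ↔ x₂ ∉ C := by
  refine ⟨fun h₁ h₂ => hC.2 (C \ {x₂}) (Set.sdiff_singleton_ssubset.2 h₂) ?_, fun h₂ => ?_⟩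
  · intro v w hvw
    have hw : v = x₂ → w = x₁ := fun h => hleaf w (h ▸ hvw)
    have hv : w = x₂ → v = x₁ := fun h => hleaf v (h ▸ hvw.symm)
    have hcover := hC.1 hvw
    have hne := hadj.ne
    grind
  · exact (hC.1 hadj).resolve_right h₂

end CW

theorem stmt_10_general {V : Type*} [Fintype V] (K : Type*) [Field K]
    (G : SimpleGraph V) [DecidableRel G.Adj] (x1 x2 : V)
    (hadj : G.Adj x1 x2) (hleaf : G.degree x2 = 1) (s : ℕ) (hs : 1 ≤ s) :
    (CW.symbolicPower K G s).colon
        (Ideal.span {(X x1 : MvPolynomial V K) * X x2})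
      = CW.symbolicPower K G (s - 1) := by
  obtain ⟨s, rfl⟩ := Nat.exists_eq_add_of_le' hs
  have hleaf' : ∀ w, G.Adj x2 w → w = x1 := fun w hw =>
    (SimpleGraph.degree_eq_one_iff_existsUnique_adj.1 hleaf).unique hw hadj.symm
  simp only [CW.symbolicPower, Submodule.iInf_colon, Nat.add_sub_cancel]
  refine iInf_congr fun C => iInf_congr fun hC => ?_
  have hC' := hC.mem_iff_notMem_of_pendant hadj hleaf'
  by_cases h1 : x1 ∈ C
  · exact CW.coverIdeal_pow_succ_colon_X_mul_X h1 (hC'.1 h1) s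
  · rw [mul_comm]
    exact CW.coverIdeal_pow_succ_colon_X_mul_X (not_not.1 (mt hC'.2 h1)) h1 s

/-- If `x1 x2` is a pendant edge of `G` (`x2` a leaf), then for every `s ≥ 1` we have
`(I(G)^(s) : x1·x2) = I(G)^(s-1)`. -/
theorem stmt_10 {V : Type*} [Fintype V] [DecidableEq V] (K : Type*) [Field K]
    (G : SimpleGraph V) [DecidableRel G.Adj] (x1 x2 : V)
    (hadj : G.Adj x1 x2) (hleaf : G.degree x2 = 1) (s : ℕ) (hs : 1 ≤ s) :
    (CW.symbolicPower K G s).colon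
        (Ideal.span {(X x1 : MvPolynomial V K) * X x2})
      = CW.symbolicPower K G (s - 1) :=
  stmt_10_general K G x1 x2 hadj hleaf s hs
end

section
/- Let G be a finite simple graph with a pendant triangle T = {x1, x2, x3} where deg(x2) = deg(x3) = 2. Then for every s ≥ 1, the ideal ((I(G)^(s) : x1·x2) + (x3)) equals ((I(G \ x3)^(s) : x1·x2) + (x3)), and consequently (I(G)^(s) : x1·x2) + (x3) = I(G \ x3)^(s-1) + (x3), since x1x2 is a pendant edge of G \ x3. -/
open MvPolynomial

/-!
A monomial `x^d` lies in `P_C^k` iff `d` has at least `k` factors from `C`, so membership in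
`I(G)^(s)` and in its colon by `x1·x2` is a condition on each monomial of the support,
one inequality per minimal vertex cover. Modulo `x3` only the `x3`-free monomials count, and for
those the conditions for `G` and for `H = G \ x3` agree: removing `x3` from a minimal cover of `G`
containing it gives a minimal cover of `H`, adding `x3` to a minimal cover of `H` gives one of `G`
(one of its neighbours `x1`, `x2` is missing), and a minimal cover of `G` avoiding `x3` contains a
minimal cover of `H`. As `x2` is a leaf of `H`, every minimal cover of `H` contains exactly one of
`x1`, `x2`, so multiplying by `x1·x2` raises each weight by exactly one.
-/

namespace CW

section VertexCover

variable {V : Type*} {G : SimpleGraph V} {C : Set V} {x y z : V}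

lemma isMinimalVertexCover_iff_minimal :
    IsMinimalVertexCover G C ↔ Minimal (IsVertexCover G) C :=
  Set.minimal_iff_forall_ssubset.symm

lemma IsVertexCover.sdiff_deleteVerts (h : IsVertexCover G C) (U : Set V) :
    IsVertexCover (deleteVerts G U) (C \ U) :=
  fun _ _ hvw => (h hvw.1).imp (fun hv => ⟨hv, hvw.2.1⟩) (fun hw => ⟨hw, hvw.2.2⟩)

lemma IsVertexCover.insert_of_deleteVerts (h : IsVertexCover (deleteVerts G {x}) C) :
    IsVertexCover G (insert x C) := by
  intro v w hvw
  by_cases hv : v = x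
  · exact Or.inl (Or.inl hv)
  by_cases hw : w = x
  · exact Or.inr (Or.inl hw)
  exact (h ⟨hvw, hv, hw⟩).imp Or.inr Or.inr

lemma IsVertexCover.exists_isMinimalVertexCover_subset [Finite V] (h : IsVertexCover G C) :
    ∃ D ⊆ C, IsMinimalVertexCover G D := by
  obtain ⟨D, hDC, hD⟩ := exists_minimal_le_of_wellFoundedLT _ C h
  exact ⟨D, hDC, isMinimalVertexCover_iff_minimal.2 hD⟩

lemma IsMinimalVertexCover.sdiff_singleton (hC : IsMinimalVertexCover G C) (hx : x ∈ C) :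
    IsMinimalVertexCover (deleteVerts G {x}) (C \ {x}) := by
  rw [isMinimalVertexCover_iff_minimal] at hC ⊢
  refine ⟨hC.prop.sdiff_deleteVerts {x}, fun D hD hDC => ?_⟩
  have hC_eq := hC.eq_of_subset hD.insert_of_deleteVerts
    (Set.insert_subset hx (hDC.trans Set.sdiff_subset))
  rintro v ⟨hvC, hvx⟩
  rw [← hC_eq] at hvC
  exact hvC.resolve_left hvx

lemma IsMinimalVertexCover.insert_of_deleteVerts
    (hC : IsMinimalVertexCover (deleteVerts G {x}) C) (hxy : G.Adj x y) (hy : y ∉ C) :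
    IsMinimalVertexCover G (insert x C) := by
  rw [isMinimalVertexCover_iff_minimal] at hC ⊢
  refine ⟨hC.prop.insert_of_deleteVerts, fun D hD hDC => ?_⟩
  have hyD : y ∉ D := fun h => (hDC h).elim (fun e => hxy.ne e.symm) hy
  have hxD : x ∈ D := (hD hxy).resolve_right hyD
  have hCD : C ⊆ D \ {x} :=
    hC.2 (hD.sdiff_deleteVerts {x}) fun v hv => (hDC hv.1).resolve_left hv.2
  exact Set.insert_subset hxD (hCD.trans Set.sdiff_subset)

lemma IsMinimalVertexCover.mem_iff_notMem_of_leaf (hC : IsMinimalVertexCover G C)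
    (hyz : G.Adj y z) (hleaf : ∀ v, G.Adj y v → v = z) : y ∈ C ↔ z ∉ C := by
  rw [isMinimalVertexCover_iff_minimal] at hC
  refine ⟨fun hy hz => hC.notMem_of_prop_sdiff_singleton ?_ hy,
    fun hz => (hC.prop hyz).resolve_right hz⟩
  intro v w hvw
  rcases eq_or_ne v y with rfl | hv
  · exact Or.inr ⟨hleaf w hvw ▸ hz, hvw.ne.symm⟩
  rcases eq_or_ne w y with rfl | hw
  · exact Or.inl ⟨hleaf v hvw.symm ▸ hz, hv⟩
  exact (hC.prop hvw).imp (fun h => ⟨h, hv⟩) (fun h => ⟨h, hw⟩)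

lemma eq_or_eq_of_degree_eq_two {a b v : V} [Fintype (G.neighborSet y)]
    (hd : G.degree y = 2) (ha : G.Adj y a) (hb : G.Adj y b) (hab : a ≠ b) (hv : G.Adj y v) :
    v = a ∨ v = b := by
  classical
  have hN : G.neighborFinset y = {a, b} :=
    (Finset.eq_of_subset_of_card_le (by simp [Finset.insert_subset_iff, ha, hb])
      (by rw [SimpleGraph.card_neighborFinset_eq_degree, hd, Finset.card_pair hab])).symm
  simpa [hN] using (G.mem_neighborFinset y v).2 hv

end VertexCover

section MonomialIdeals

variable {σ K : Type*} [Field K]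

noncomputable def coverWeight (C : Set σ) : (σ →₀ ℕ) →+ ℕ :=
  Finsupp.weight (C.indicator 1)

lemma coverWeight_single_one (C : Set σ) (v : σ) :
    coverWeight C (Finsupp.single v 1) = C.indicator 1 v := by
  simp [coverWeight, Finsupp.weight_single]

lemma coverWeight_singleton (x : σ) (d : σ →₀ ℕ) : coverWeight {x} d = d x := by
  classical
  rw [coverWeight, Set.indicator_singleton, Pi.one_apply, Finsupp.weight_single_one_apply]

lemma coverWeight_congr {C C' : Set σ} {d : σ →₀ ℕ}
    (h : ∀ v, d v ≠ 0 → (v ∈ C ↔ v ∈ C')) : coverWeight C d = coverWeight C' d := by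
  simp only [coverWeight, Finsupp.weight_apply]
  refine Finsupp.sum_congr fun v hv => ?_
  classical
  simp only [Set.indicator_apply, h v (Finsupp.mem_support_iff.1 hv)]

lemma coverWeight_mono_left {C C' : Set σ} (h : C ⊆ C') (d : σ →₀ ℕ) :
    coverWeight C d ≤ coverWeight C' d := by
  simp only [coverWeight, Finsupp.weight_apply]
  exact Finset.sum_le_sum fun v _ =>
    Nat.mul_le_mul_left _ (Set.indicator_le_indicator_of_subset h (by simp) v)

lemma coverWeight_mono_right (C : Set σ) {d e : σ →₀ ℕ} (h : d ≤ e) :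
    coverWeight C d ≤ coverWeight C e := by
  rw [← tsub_add_cancel_of_le h, map_add]
  exact Nat.le_add_left _ _

lemma exists_mem_of_coverWeight_pos {C : Set σ} {d : σ →₀ ℕ} (h : 0 < coverWeight C d) :
    ∃ v ∈ C, d v ≠ 0 := by
  contrapose! h
  refine Nat.le_zero.2 (Finset.sum_eq_zero fun v _ => ?_)
  by_cases hv : v ∈ C <;> simp [hv, h]

lemma coverWeight_sub_single_add {C : Set σ} {d : σ →₀ ℕ} {v : σ} (hv : v ∈ C)
    (hdv : d v ≠ 0) : coverWeight C (d - Finsupp.single v 1) + 1 = coverWeight C d := by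
  have h := Finsupp.weight_sub_single_add (w := C.indicator (1 : σ → ℕ)) hdv
  rwa [Set.indicator_of_mem hv, Pi.one_apply] at h

lemma coverIdeal_pow_eq_span (C : Set σ) (k : ℕ) :
    coverIdeal K C ^ k =
      Ideal.span ((fun d => monomial d (1 : K)) '' {d | k ≤ coverWeight C d}) := by
  induction k with
  | zero =>
    rw [pow_zero, Ideal.one_eq_top, eq_comm, Ideal.eq_top_iff_one]
    exact Ideal.subset_span ⟨0, Nat.zero_le _, rfl⟩
  | succ k ih =>
    rw [pow_succ, ih, coverIdeal, Ideal.span_mul_span']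
    apply le_antisymm
    · rw [Ideal.span_le]
      rintro _ ⟨_, ⟨d, hd, rfl⟩, _, ⟨v, hv, rfl⟩, rfl⟩
      refine Ideal.subset_span ⟨d + Finsupp.single v 1, ?_, by simp [X, monomial_mul]⟩
      simp only [Set.mem_ofPred_eq, map_add, coverWeight_single_one, Set.indicator_of_mem hv,
        Pi.one_apply] at hd ⊢
      omega
    · rw [Ideal.span_le]
      rintro _ ⟨d, hd, rfl⟩
      obtain ⟨v, hv, hdv⟩ := exists_mem_of_coverWeight_pos (lt_of_lt_of_le k.succ_pos hd)
      have hw := coverWeight_sub_single_add hv hdv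
      have hd_eq : d - Finsupp.single v 1 + Finsupp.single v 1 = d :=
        tsub_add_cancel_of_le (Finsupp.single_le_iff.2 (Nat.one_le_iff_ne_zero.2 hdv))
      refine Ideal.subset_span
        ⟨_, ⟨d - Finsupp.single v 1, ?_, rfl⟩, _, ⟨v, hv, rfl⟩, ?_⟩
      · simp only [Set.mem_ofPred_eq] at hd ⊢
        omega
      · simp only [X, monomial_mul, one_mul, hd_eq]

lemma mem_coverIdeal_pow_iff {C : Set σ} {k : ℕ} {f : MvPolynomial σ K} :
    f ∈ coverIdeal K C ^ k ↔ ∀ d ∈ f.support, k ≤ coverWeight C d := by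
  rw [coverIdeal_pow_eq_span, mem_ideal_span_monomial_image]
  refine forall₂_congr fun d _ => ⟨?_, fun h => ⟨d, h, le_rfl⟩⟩
  rintro ⟨e, he, hed⟩
  exact le_trans he (coverWeight_mono_right C hed)

lemma mem_symbolicPower_iff {G : SimpleGraph σ} {s : ℕ} {f : MvPolynomial σ K} :
    f ∈ symbolicPower K G s ↔
      ∀ C, IsMinimalVertexCover G C → ∀ d ∈ f.support, s ≤ coverWeight C d := by
  simp only [symbolicPower, Submodule.mem_iInf, Set.mem_ofPred_eq, mem_coverIdeal_pow_iff]

lemma mem_symbolicPower_colon_iff {G : SimpleGraph σ} {s : ℕ} {a : σ →₀ ℕ}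
    {g : MvPolynomial σ K} :
    g ∈ (symbolicPower K G s).colon (Ideal.span {monomial a (1 : K)}) ↔
      ∀ C, IsMinimalVertexCover G C → ∀ d ∈ g.support, s ≤ coverWeight C (d + a) := by
  rw [Ideal.mem_colon_span_singleton, mem_symbolicPower_iff]
  have : (g * monomial a 1).support = g.support.map (addRightEmbedding a) :=
    AddMonoidAlgebra.support_coeff_mul_single g _ (by simp) _
  simp only [this, Finset.forall_mem_map, addRightEmbedding_apply]

/-- The sum of the terms of a polynomial not divisible by `X x`: its component of degree `0`
for the degree in `x`. -/
noncomputable def freePart (x : σ) : MvPolynomial σ K →ₗ[K] MvPolynomial σ K :=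
  weightedHomogeneousComponent (({x} : Set σ).indicator 1) 0

lemma coeff_freePart (x : σ) (f : MvPolynomial σ K) (d : σ →₀ ℕ) :
    coeff d (freePart x f) = if d x = 0 then coeff d f else 0 := by
  rw [freePart, coeff_weightedHomogeneousComponent, ← coverWeight, coverWeight_singleton]

lemma mem_support_freePart {x : σ} {f : MvPolynomial σ K} {d : σ →₀ ℕ} :
    d ∈ (freePart x f).support ↔ d ∈ f.support ∧ d x = 0 := by
  simp only [mem_support_iff, coeff_freePart]
  split_ifs with h <;> simp [h]

lemma sub_freePart_mem_span_X (x : σ) (f : MvPolynomial σ K) :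
    f - freePart x f ∈ Ideal.span {X x} := by
  rw [← Set.image_singleton, mem_ideal_span_X_image]
  intro d hd
  refine ⟨x, rfl, fun hdx => ?_⟩
  simp [mem_support_iff, coeff_freePart, hdx] at hd

lemma sup_span_X_le_of_freePart_mem {I J : Ideal (MvPolynomial σ K)} {x : σ}
    (h : ∀ f ∈ I, freePart x f ∈ J) :
    I ⊔ Ideal.span {X x} ≤ J ⊔ Ideal.span {X x} := by
  refine sup_le (fun f hf => ?_) le_sup_right
  rw [← add_sub_cancel (freePart x f) f]
  exact Ideal.add_mem _ (Ideal.mem_sup_left (h f hf))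
    (Ideal.mem_sup_right (sub_freePart_mem_span_X x f))

end MonomialIdeals

section DeleteVertex

variable {V K : Type*} [Field K] {G : SimpleGraph V} {x : V} {a : V →₀ ℕ} {s : ℕ}

lemma coverWeight_insert_of_eq_zero {C : Set V} {e : V →₀ ℕ} (he : e x = 0) :
    coverWeight (insert x C) e = coverWeight C e :=
  coverWeight_congr fun v hv => by
    rw [Set.mem_insert_iff, or_iff_right fun (hvx : v = x) => hv (hvx ▸ he)]

lemma coverWeight_sdiff_singleton_of_eq_zero {C : Set V} {e : V →₀ ℕ} (he : e x = 0) :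
    coverWeight (C \ {x}) e = coverWeight C e :=
  coverWeight_congr fun v hv => by
    rw [Set.mem_sdiff, Set.mem_singleton_iff,
      and_iff_left fun (hvx : v = x) => hv (hvx ▸ he)]

lemma freePart_mem_colon_deleteVerts
    (hext : ∀ C, IsMinimalVertexCover (deleteVerts G {x}) C →
      IsMinimalVertexCover G (insert x C))
    (ha : a x = 0) {g : MvPolynomial V K}
    (hg : g ∈ (symbolicPower K G s).colon (Ideal.span {monomial a (1 : K)})) :
    freePart x g ∈
      (symbolicPower K (deleteVerts G {x}) s).colon (Ideal.span {monomial a (1 : K)}) := by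
  rw [mem_symbolicPower_colon_iff] at hg ⊢
  intro C hC d hd
  rw [mem_support_freePart] at hd
  rw [← coverWeight_insert_of_eq_zero (x := x) (by simp [hd.2, ha])]
  exact hg _ (hext C hC) d hd.1

lemma freePart_mem_colon_of_deleteVerts [Finite V] (ha : a x = 0) {g : MvPolynomial V K}
    (hg : g ∈
      (symbolicPower K (deleteVerts G {x}) s).colon (Ideal.span {monomial a (1 : K)})) :
    freePart x g ∈ (symbolicPower K G s).colon (Ideal.span {monomial a (1 : K)}) := by
  rw [mem_symbolicPower_colon_iff] at hg ⊢
  intro C hC d hd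
  rw [mem_support_freePart] at hd
  by_cases hx : x ∈ C
  · rw [← coverWeight_sdiff_singleton_of_eq_zero (x := x) (by simp [hd.2, ha])]
    exact hg _ (hC.sdiff_singleton hx) d hd.1
  · obtain ⟨D, hDC, hD⟩ := (hC.1.sdiff_deleteVerts {x}).exists_isMinimalVertexCover_subset
    exact (hg D hD d hd.1).trans (coverWeight_mono_left (hDC.trans Set.sdiff_subset) _)

lemma symbolicPower_colon_eq_of_coverWeight_eq {m : ℕ}
    (h : ∀ C, IsMinimalVertexCover G C → coverWeight C a = m) :
    (symbolicPower K G s).colon (Ideal.span {monomial a (1 : K)}) = symbolicPower K G (s - m) := by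
  ext g
  rw [mem_symbolicPower_colon_iff, mem_symbolicPower_iff]
  refine forall₂_congr fun C hC => forall₂_congr fun d _ => ?_
  rw [map_add, h C hC]
  omega

end DeleteVertex

end CW

theorem stmt_17_general {V : Type*} [Fintype V] (K : Type*) [Field K]
    (G : SimpleGraph V) [DecidableRel G.Adj] (x1 x2 x3 : V)
    (h12 : G.Adj x1 x2) (h13 : G.Adj x1 x3) (h23 : G.Adj x2 x3)
    (hd2 : G.degree x2 = 2)
    (s : ℕ) :
    (CW.symbolicPower K G s).colon
          (Ideal.span {(X x1 : MvPolynomial V K) * X x2})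
        ⊔ Ideal.span {(X x3 : MvPolynomial V K)}
      = (CW.symbolicPower K (CW.deleteVerts G {x3}) s).colon
            (Ideal.span {(X x1 : MvPolynomial V K) * X x2})
          ⊔ Ideal.span {(X x3 : MvPolynomial V K)} ∧
    (CW.symbolicPower K G s).colon
          (Ideal.span {(X x1 : MvPolynomial V K) * X x2})
        ⊔ Ideal.span {(X x3 : MvPolynomial V K)}
      = CW.symbolicPower K (CW.deleteVerts G {x3}) (s - 1)
          ⊔ Ideal.span {(X x3 : MvPolynomial V K)} := by
  open CW in
  set H := deleteVerts G {x3}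
  have hleaf : ∀ v, H.Adj x2 v → v = x1 := fun v hv =>
    (eq_or_eq_of_degree_eq_two hd2 h12.symm h23 h13.ne hv.1).resolve_right hv.2.2
  have hcover (C) (hC : IsMinimalVertexCover H C) : x2 ∈ C ↔ x1 ∉ C :=
    hC.mem_iff_notMem_of_leaf ⟨h12.symm, h23.ne, h13.ne⟩ hleaf
  set a : V →₀ ℕ := Finsupp.single x1 1 + Finsupp.single x2 1
  have ha : a x3 = 0 := by simp [a, h13.ne, h23.ne]
  have hX : (X x1 : MvPolynomial V K) * X x2 = monomial a 1 := by simp [a, X, monomial_mul]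
  have hweight (C) (hC : IsMinimalVertexCover H C) : coverWeight C a = 1 := by
    by_cases h1 : x1 ∈ C <;> simp [a, coverWeight_single_one, h1, hcover C hC]
  have hext (C) (hC : IsMinimalVertexCover H C) : IsMinimalVertexCover G (insert x3 C) := by
    by_cases h1 : x1 ∈ C
    · exact hC.insert_of_deleteVerts h23.symm fun h2 => (hcover C hC).1 h2 h1
    · exact hC.insert_of_deleteVerts h13.symm h1
  have hsup : (symbolicPower K G s).colon (Ideal.span {monomial a (1 : K)}) ⊔ Ideal.span {X x3} =
      (symbolicPower K H s).colon (Ideal.span {monomial a (1 : K)}) ⊔ Ideal.span {X x3} :=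
    le_antisymm
      (sup_span_X_le_of_freePart_mem fun _ hg => freePart_mem_colon_deleteVerts hext ha hg)
      (sup_span_X_le_of_freePart_mem fun _ hg => freePart_mem_colon_of_deleteVerts ha hg)
  rw [hX]
  exact ⟨hsup, hsup.trans (by rw [symbolicPower_colon_eq_of_coverWeight_eq hweight])⟩

/-- If `T = {x1, x2, x3}` is a pendant triangle of `G` with `deg(x2) = deg(x3) = 2`,
then for every `s ≥ 1`,
`(I(G)^(s) : x1·x2) + (x3) = (I(G \ x3)^(s) : x1·x2) + (x3)`, and consequently
`(I(G)^(s) : x1·x2) + (x3) = I(G \ x3)^(s-1) + (x3)`. -/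
theorem stmt_17 {V : Type*} [Fintype V] [DecidableEq V] (K : Type*) [Field K]
    (G : SimpleGraph V) [DecidableRel G.Adj] (x1 x2 x3 : V)
    (h12 : G.Adj x1 x2) (h13 : G.Adj x1 x3) (h23 : G.Adj x2 x3)
    (hd2 : G.degree x2 = 2) (hd3 : G.degree x3 = 2) (hd1 : G.degree x1 ≠ 2)
    (s : ℕ) (hs : 1 ≤ s) :
    (CW.symbolicPower K G s).colon
          (Ideal.span {(X x1 : MvPolynomial V K) * X x2})
        ⊔ Ideal.span {(X x3 : MvPolynomial V K)}
      = (CW.symbolicPower K (CW.deleteVerts G {x3}) s).colon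
            (Ideal.span {(X x1 : MvPolynomial V K) * X x2})
          ⊔ Ideal.span {(X x3 : MvPolynomial V K)} ∧
    (CW.symbolicPower K G s).colon
          (Ideal.span {(X x1 : MvPolynomial V K) * X x2})
        ⊔ Ideal.span {(X x3 : MvPolynomial V K)}
      = CW.symbolicPower K (CW.deleteVerts G {x3}) (s - 1)
          ⊔ Ideal.span {(X x3 : MvPolynomial V K)} :=
  stmt_17_general K G x1 x2 x3 h12 h13 h23 hd2 s
end
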